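/- For every finite nonempty sequence x ∈ Σ_A^Z, the generalized cylinder Z(x) ⊆ Σ_A^Z, with the subspace topology, is homeomorphic to the Ott–Tomforde–Willis one-sided full shift Σ_A^N, via the map sending z ∈ Σ_A^N to the sequence agreeing with x on coordinates ≤ l(x) and with z shifted to coordinates > l(x). -/

import Mathlib

open Set Topology Filter TopologicalSpace

universe u

/-- The two-sided full shift over `A`: sequences over `A ∪ {ø}` (with `ø = none`)
in which the empty letter propagates to the right. -/
def SigmaZ (A : Type u) : Type u :=
  {x : ℤ → Option A // ∀ i, x i = none → x (i + 1) = none}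

namespace SigmaZ

variable {A : Type u}

/-- The generalized cylinder `Z(x, F)`, where the finite nonempty sequence `x` is
encoded by its length `k` and its letters `w i` for `i ≤ k`. -/
def cyl (k : ℤ) (w : ℤ → A) (F : Finset A) : Set (SigmaZ A) :=
  {y | (∀ i ≤ k, y.1 i = some (w i)) ∧ ∀ a ∈ F, y.1 (k + 1) ≠ some a}

/-- Generalized cylinders together with complements of finite unions of cylinders `Z(x)`. -/
def basicSets (A : Type u) : Set (Set (SigmaZ A)) :=
  {s | (∃ (k : ℤ) (w : ℤ → A) (F : Finset A), s = cyl k w F) ∨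
    ∃ (n : ℕ) (ks : Fin n → ℤ) (ws : Fin n → ℤ → A),
      s = (⋃ j, cyl (ks j) (ws j) ∅)ᶜ}

instance : TopologicalSpace (SigmaZ A) :=
  TopologicalSpace.generateFrom (basicSets A)

/-- The empty sequence `Ø`. -/
def emptySeq (A : Type u) : SigmaZ A := ⟨fun _ => none, fun _ _ => rfl⟩

/-- The shift map. -/
def shift (x : SigmaZ A) : SigmaZ A :=
  ⟨fun i => x.1 (i + 1), fun i h => x.2 (i + 1) h⟩

end SigmaZ
/-- The Ott–Tomforde–Willis one-sided full shift over `A`. -/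
def OneSided (A : Type u) : Type u :=
  {y : ℕ → Option A // ∀ n, y n = none → y (n + 1) = none}

namespace OneSided

variable {A : Type u}

/-- Generalized cylinder `Z(w, F)` of the one-sided full shift. -/
def cyl (w : List A) (F : Finset A) : Set (OneSided A) :=
  {y | (∀ n : ℕ, n < w.length → y.1 n = w[n]?) ∧ ∀ a ∈ F, y.1 w.length ≠ some a}

instance : TopologicalSpace (OneSided A) :=
  TopologicalSpace.generateFrom {s | ∃ (w : List A) (F : Finset A), s = cyl w F}

end OneSided

namespace SigmaZ

variable {A : Type u}

/-- The projection of the two-sided full shift onto the positive coordinates. -/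
def proj (x : SigmaZ A) : OneSided A :=
  ⟨fun n => x.1 ((n : ℤ) + 1), fun n h => by
    have h2 := x.2 ((n : ℤ) + 1) h
    have h3 : ((n : ℤ) + 1) + 1 = ((n + 1 : ℕ) : ℤ) + 1 := by push_cast; ring
    rwa [h3] at h2⟩

end SigmaZ

namespace SigmaZ

variable {A : Type u}

/-- Gluing the word `w` (up to coordinate `k`) with a shifted copy of `z`. -/
def glue (k : ℤ) (w : ℤ → A) (z : OneSided A) : SigmaZ A :=
  ⟨fun i => if i ≤ k then some (w i) else z.1 (i - k - 1).toNat, by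
    intro i h
    by_cases hik : i ≤ k
    · simp [hik] at h
    · have h' : z.1 (i - k - 1).toNat = none := by simpa [hik] using h
      have hik1 : ¬ i + 1 ≤ k := by omega
      have ht : (i + 1 - k - 1).toNat = (i - k - 1).toNat + 1 := by omega
      simp only [hik1, if_false, ht]
      exact z.2 _ h'⟩

lemma glue_mem (k : ℤ) (w : ℤ → A) (z : OneSided A) :
    glue k w z ∈ SigmaZ.cyl k w (∅ : Finset A) := by
  refine ⟨fun i hi => ?_, by simp⟩
  simp [glue, hi]

/-- The inverse: read off the coordinates `> k`. -/
def unglue (k : ℤ) (y : SigmaZ A) : OneSided A :=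
  ⟨fun n => y.1 (k + 1 + n), fun n h => by
    have h2 := y.2 (k + 1 + n) h
    have h3 : k + 1 + n + 1 = k + 1 + ((n + 1 : ℕ) : ℤ) := by push_cast; ring
    rwa [h3] at h2⟩

lemma isOpen_cyl (k : ℤ) (w : ℤ → A) (F : Finset A) : IsOpen (SigmaZ.cyl k w F) :=
  TopologicalSpace.GenerateOpen.basic _ (Or.inl ⟨k, w, F, rfl⟩)

end SigmaZ

namespace OneSided

variable {A : Type u}

lemma isOpen_cyl (u : List A) (F : Finset A) : IsOpen (OneSided.cyl u F) :=
  TopologicalSpace.GenerateOpen.basic _ ⟨u, F, rfl⟩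

lemma isOpen_compl_cyl_empty (u : List A) :
    IsOpen ((OneSided.cyl u (∅ : Finset A))ᶜ) := by
  classical
  rw [isOpen_iff_forall_mem_open]
  intro y hy
  have hex : ∃ n, n < u.length ∧ y.1 n ≠ u[n]? := by
    by_contra hc
    push_neg at hc
    exact hy ⟨fun n hn => hc n hn, by simp⟩
  obtain ⟨hnlt, hne⟩ := Nat.find_spec hex
  set n := Nat.find hex with hn_def
  have hmin : ∀ m < n, y.1 m = u[m]? := by
    intro m hm
    by_contra hcm
    have hle : Nat.find hex ≤ m := Nat.find_le ⟨lt_trans hm hnlt, hcm⟩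
    omega
  have hget : u[n]? = some (u.get ⟨n, hnlt⟩) := List.getElem?_eq_getElem hnlt
  cases hyn : y.1 n with
  | none =>
      refine ⟨OneSided.cyl (u.take n) {u.get ⟨n, hnlt⟩}, ?_, isOpen_cyl _ _, ?_⟩
      · intro y' hy' hy'mem
        have hlen : (u.take n).length = n := by
          simp [List.length_take]; omega
        have := hy'.2 (u.get ⟨n, hnlt⟩) (Finset.mem_singleton_self _)
        rw [hlen] at this
        exact this (by rw [hy'mem.1 n hnlt, hget])
      · refine ⟨fun m hm => ?_, fun a ha => ?_⟩
        · have hmn : m < n := by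
            have := (List.length_take (i := n) (l := u)) ▸ hm; simp at this ⊢; omega
          rw [hmin m hmn, List.getElem?_take_of_lt hmn]
        · have hlen : (u.take n).length = n := by
            simp [List.length_take]; omega
          rw [hlen, hyn]; simp
  | some b =>
      have hbne : some b ≠ u[n]? := hyn ▸ hne
      refine ⟨OneSided.cyl (u.take n ++ [b]) ∅, ?_, isOpen_cyl _ _, ?_⟩
      · intro y' hy' hy'mem
        have hlen : (u.take n ++ [b]).length = n + 1 := by
          simp [List.length_take]; omega
        have h1 : y'.1 n = some b := by
          have := hy'.1 n (by omega)
          rw [this]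
          have htn : (u.take n).length = n := by simp [List.length_take]; omega
          rw [List.getElem?_append_right (by omega), htn]
          simp
        have h2 : y'.1 n = u[n]? := hy'mem.1 n hnlt
        exact hbne (h1 ▸ h2)
      · refine ⟨fun m hm => ?_, by simp⟩
        have hlen : (u.take n ++ [b]).length = n + 1 := by
          simp [List.length_take]; omega
        rw [hlen] at hm
        rcases Nat.lt_or_ge m n with hmn | hmn
        · rw [hmin m hmn, List.getElem?_append_left (by simp [List.length_take]; omega),
            List.getElem?_take_of_lt hmn]
        · have hmn' : m = n := by omega
          subst hmn'
          have htn : (u.take n).length = n := by simp [List.length_take]; omega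
          rw [List.getElem?_append_right (by omega), htn, hyn]
          simp

end OneSided

namespace SigmaZ

variable {A : Type u}

lemma glue_preimage (k : ℤ) (w : ℤ → A) (k' : ℤ) (w' : ℤ → A) (F' : Finset A) :
    glue k w ⁻¹' (SigmaZ.cyl k' w' F') = ∅ ∨
    glue k w ⁻¹' (SigmaZ.cyl k' w' F') = Set.univ ∨
    ∃ u : List A, glue k w ⁻¹' (SigmaZ.cyl k' w' F') = OneSided.cyl u F' := by
  classical
  rcases lt_or_ge k' k with hk | hk
  · -- constant case
    have hmem : ∀ z : OneSided A, glue k w z ∈ SigmaZ.cyl k' w' F' ↔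
        ((∀ i ≤ k', w i = w' i) ∧ ∀ a ∈ F', w (k' + 1) ≠ a) := by
      intro z
      constructor
      · rintro ⟨h1, h2⟩
        refine ⟨fun i hi => ?_, fun a ha hwa => ?_⟩
        · have := h1 i hi
          have hik : i ≤ k := by omega
          simpa [glue, hik] using this
        · have := h2 a ha
          have hik : k' + 1 ≤ k := by omega
          simp only [glue, hik, if_true] at this
          exact this (by rw [hwa])
      · rintro ⟨h1, h2⟩
        refine ⟨fun i hi => ?_, fun a ha hwa => ?_⟩
        · have hik : i ≤ k := by omega
          simp [glue, hik, h1 i hi]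
        · have hik : k' + 1 ≤ k := by omega
          simp only [glue, hik, if_true, Option.some.injEq] at hwa
          exact h2 a ha hwa
    by_cases hP : (∀ i ≤ k', w i = w' i) ∧ ∀ a ∈ F', w (k' + 1) ≠ a
    · right; left
      exact Set.eq_univ_of_forall (fun z => (hmem z).mpr hP)
    · left
      exact Set.eq_empty_iff_forall_notMem.mpr (fun z hz => hP ((hmem z).mp hz))
  · by_cases hcond : ∀ i ≤ k, w i = w' i
    · right; right
      refine ⟨(List.range (k' - k).toNat).map (fun n : ℕ => w' (k + 1 + (n : ℤ))), ?_⟩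
      have hlen : ((List.range (k' - k).toNat).map (fun n : ℕ => w' (k + 1 + (n : ℤ)))).length
          = (k' - k).toNat := by rw [List.length_map, List.length_range]
      ext z
      constructor
      · rintro ⟨h1, h2⟩
        refine ⟨fun n hn => ?_, fun a ha => ?_⟩
        · rw [hlen] at hn
          have hik : ¬ (k + 1 + (n : ℤ) ≤ k) := by omega
          have hi : k + 1 + (n : ℤ) ≤ k' := by omega
          have := h1 (k + 1 + n) hi
          simp only [glue, hik, if_false] at this
          have ht : (k + 1 + (n : ℤ) - k - 1).toNat = n := by omega
          rw [ht] at this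
          rw [this, List.getElem?_map, List.getElem?_range hn]
          rfl
        · have := h2 a ha
          have hik : ¬ (k' + 1 ≤ k) := by omega
          simp only [glue, hik, if_false] at this
          have ht : (k' + 1 - k - 1).toNat = (k' - k).toNat := by omega
          rw [ht] at this
          rw [hlen]
          exact this
      · rintro ⟨h1, h2⟩
        refine ⟨fun i hi => ?_, fun a ha => ?_⟩
        · by_cases hik : i ≤ k
          · simp [glue, hik, hcond i hik]
          · have hn : (i - k - 1).toNat < (k' - k).toNat := by omega
            have := h1 (i - k - 1).toNat (by rw [hlen]; exact hn)
            rw [List.getElem?_map, List.getElem?_range hn] at this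
            simp only [glue, hik, if_false]
            rw [this, Option.map_some]
            have hidx : k + 1 + ((i - k - 1).toNat : ℤ) = i := by omega
            rw [hidx]
        · have hik : ¬ (k' + 1 ≤ k) := by omega
          simp only [glue, hik, if_false]
          have ht : (k' + 1 - k - 1).toNat = (k' - k).toNat := by omega
          rw [ht]
          have := h2 a ha
          rwa [hlen] at this
    · left
      push_neg at hcond
      obtain ⟨i, hik, hne⟩ := hcond
      refine Set.eq_empty_iff_forall_notMem.mpr (fun z hz => ?_)
      have := hz.1 i (by omega)
      simp only [glue, hik, if_true, Option.some.injEq] at this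
      exact hne this

lemma glue_continuous (k : ℤ) (w : ℤ → A) :
    Continuous (glue k w : OneSided A → SigmaZ A) := by
  apply continuous_generateFrom_iff.mpr
  rintro s (⟨k', w', F', rfl⟩ | ⟨n, ks, ws, rfl⟩)
  · rcases glue_preimage k w k' w' F' with h | h | ⟨u, h⟩
    · rw [h]; exact isOpen_empty
    · rw [h]; exact isOpen_univ
    · rw [h]; exact OneSided.isOpen_cyl u F'
  · rw [Set.preimage_compl, Set.preimage_iUnion, Set.compl_iUnion]
    apply isOpen_iInter_of_finite
    intro j
    rcases glue_preimage k w (ks j) (ws j) ∅ with h | h | ⟨u, h⟩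
    · rw [h, Set.compl_empty]; exact isOpen_univ
    · rw [h, Set.compl_univ]; exact isOpen_empty
    · rw [h]; exact OneSided.isOpen_compl_cyl_empty u

lemma unglue_continuous (k : ℤ) (w : ℤ → A) [Nonempty A] :
    Continuous (fun y : (SigmaZ.cyl k w (∅ : Finset A)) => unglue k y.1) := by
  classical
  apply continuous_generateFrom_iff.mpr
  rintro s ⟨u, F', rfl⟩
  set d : A := Classical.arbitrary A
  set w'' : ℤ → A := fun i => if i ≤ k then w i else u.getD (i - k - 1).toNat d with hw''
  have key : (fun y : (SigmaZ.cyl k w (∅ : Finset A)) => unglue k y.1) ⁻¹' OneSided.cyl u F'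
      = Subtype.val ⁻¹' SigmaZ.cyl (k + u.length) w'' F' := by
    ext ⟨y, hy⟩
    simp only [Set.mem_preimage]
    constructor
    · rintro ⟨h1, h2⟩
      refine ⟨fun i hi => ?_, fun a ha => ?_⟩
      · by_cases hik : i ≤ k
        · rw [hy.1 i hik, hw'']; simp [hik]
        · have hn : (i - k - 1).toNat < u.length := by omega
          have := h1 (i - k - 1).toNat hn
          have hidx : k + 1 + ((i - k - 1).toNat : ℤ) = i := by omega
          rw [show (unglue k y).1 (i - k - 1).toNat = y.1 (k + 1 + ((i - k - 1).toNat : ℤ)) from rfl,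
            hidx] at this
          rw [this, List.getElem?_eq_getElem hn]
          simp only [hw'', hik, if_false]
          rw [List.getD_eq_getElem (l := u) (d := d) hn]
      · have := h2 a ha
        have hidx : k + 1 + (u.length : ℤ) = k + u.length + 1 := by ring
        rw [show (unglue k y).1 u.length = y.1 (k + 1 + (u.length : ℤ)) from rfl, hidx] at this
        exact this
    · rintro ⟨h1, h2⟩
      refine ⟨fun n hn => ?_, fun a ha => ?_⟩
      · have hik : ¬ (k + 1 + (n : ℤ) ≤ k) := by omega
        have hi : k + 1 + (n : ℤ) ≤ k + u.length := by omega
        have := h1 (k + 1 + n) hi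
        rw [show (unglue k y).1 n = y.1 (k + 1 + (n : ℤ)) from rfl, this]
        have ht : (k + 1 + (n : ℤ) - k - 1).toNat = n := by omega
        simp only [hw'', hik, if_false, ht]
        rw [List.getD_eq_getElem (l := u) (d := d) hn, List.getElem?_eq_getElem hn]
      · have hidx : k + 1 + (u.length : ℤ) = k + u.length + 1 := by ring
        rw [show (unglue k y).1 u.length = y.1 (k + 1 + (u.length : ℤ)) from rfl, hidx]
        exact h2 a ha
  rw [key]
  exact (isOpen_cyl _ _ _).preimage continuous_subtype_val

end SigmaZ

/-- Every generalized cylinder `Z(x)` (for a finite nonempty sequence `x`, encoded by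
its length `k` and letters `w`) is homeomorphic to the Ott–Tomforde–Willis one-sided
full shift, via the map gluing `x` with a shifted copy of `z`. -/
theorem stmt7 {A : Type u} [Countable A] [Infinite A] (k : ℤ) (w : ℤ → A) :
    ∃ h : OneSided A ≃ₜ (SigmaZ.cyl k w (∅ : Finset A)),
      ∀ (z : OneSided A) (i : ℤ),
        (↑(h z) : SigmaZ A).1 i =
          if i ≤ k then some (w i) else z.1 (i - k - 1).toNat := by
  classical
  refine ⟨{ toFun := fun z => ⟨SigmaZ.glue k w z, SigmaZ.glue_mem k w z⟩
            invFun := fun y => SigmaZ.unglue k y.1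
            left_inv := ?_
            right_inv := ?_
            continuous_toFun := ?_
            continuous_invFun := ?_ }, fun z i => rfl⟩
  · intro z
    apply Subtype.ext
    funext n
    have hik : ¬ (k + 1 + (n : ℤ) ≤ k) := by omega
    have ht : (k + 1 + (n : ℤ) - k - 1).toNat = n := by omega
    show (if k + 1 + (n : ℤ) ≤ k then some (w (k + 1 + (n : ℤ)))
        else z.1 ((k + 1 + (n : ℤ) - k - 1).toNat)) = z.1 n
    rw [if_neg hik, ht]
  · rintro ⟨y, hy⟩
    apply Subtype.ext
    apply Subtype.ext
    funext i
    show (if i ≤ k then some (w i) else (SigmaZ.unglue k y).1 ((i - k - 1).toNat)) = y.1 i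
    by_cases hik : i ≤ k
    · rw [if_pos hik, (hy.1 i hik)]
    · have hidx : k + 1 + ((i - k - 1).toNat : ℤ) = i := by omega
      rw [if_neg hik]
      show y.1 (k + 1 + ((i - k - 1).toNat : ℤ)) = y.1 i
      rw [hidx]
  · exact (SigmaZ.glue_continuous k w).subtype_mk _
  · exact SigmaZ.unglue_continuous k w
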